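/- arXiv:1807.07120 — 3 statements merged into one kernel-verified Lean document; each statement's English description precedes it below -/
import Mathlib

section
/- Consider the parametric quadratic program QP(θ): minimize (1/2) xᵀ Q x + cᵀ x over x ∈ ℝⁿ subject to F x ≤ b + E θ, with Q symmetric positive definite. Let Θ_feas = {θ ∈ ℝᵖ : ∃ x, F x ≤ b + E θ}, and for θ ∈ Θ_feas let x*(θ) denote the unique minimizer of QP(θ). Then the map θ ↦ x*(θ) is continuous on Θ_feas. -/
/-!
The feasible set of `QP(θ)` is the polyhedron `{x | F x ≤ d}` with `d = b + E θ`. Fourier–Motzkin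
elimination shows that `d ↦ {x | F x ≤ d}` is inner semicontinuous on its domain: a point feasible
for `d₀` is approximated by points feasible for every nearby feasible `d`. Hence the optimal value
is upper semicontinuous in `θ`; by coercivity of the cost this confines `x*(θ)` to a compact set for
`θ` near `θ₀`, and every cluster point there is feasible for `θ₀` and no worse than `x*(θ₀)`, so it
equals `x*(θ₀)` by strict convexity.
-/

open Matrix Filter Topology Set

theorem exists_forall_le_forall_le_abs_sub_le {α β : Type*} [Finite α] (l : α → ℝ)
    (u : β → ℝ) (hlu : ∀ a b, l a ≤ u b) {s δ : ℝ} (hδ : 0 ≤ δ) (hl : ∀ a, l a ≤ s + δ)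
    (hu : ∀ b, s - δ ≤ u b) : ∃ t, (∀ a, l a ≤ t) ∧ (∀ b, t ≤ u b) ∧ |t - s| ≤ δ := by
  set T := insert (s - δ) (range l)
  have hT : BddAbove T := ((finite_range l).insert _).bddAbove
  have hT₀ : T.Nonempty := insert_nonempty _ _
  refine ⟨sSup T, fun a => le_csSup hT (mem_insert_of_mem _ ⟨a, rfl⟩),
    fun b => csSup_le hT₀ ?_, abs_sub_le_iff.2 ⟨?_, ?_⟩⟩
  · simpa [T, forall_mem_range] using ⟨by linarith [hu b], fun a => hlu a b⟩
  · refine sub_le_iff_le_add'.2 (csSup_le hT₀ ?_)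
    simpa [T, forall_mem_range] using ⟨by linarith, hl⟩
  · linarith [le_csSup hT (mem_insert (s - δ) (range l))]

section
variable {ι : Type*} {n : ℕ}

theorem mulVec_cons_apply (A : Matrix ι (Fin (n + 1)) ℝ) (t : ℝ) (y : Fin n → ℝ) (i : ι) :
    (A *ᵥ Fin.cons t y) i = A i 0 * t + Fin.tail (A i) ⬝ᵥ y := by
  simp [mulVec, dotProduct, Fin.sum_univ_succ, Fin.tail]

namespace FourierMotzkin

variable (A : Matrix ι (Fin (n + 1)) ℝ)

/-- Eliminating `x 0` from `A *ᵥ x ≤ d` keeps the rows free of `x 0` and adds, for each pair of an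
upper bound (`A p 0 > 0`) and a lower bound (`A q 0 < 0`) on `x 0`, the row `bound q ≤ bound p`. -/
abbrev Index := {i // A i 0 = 0} ⊕ ({i // 0 < A i 0} × {i // A i 0 < 0})

noncomputable def matrix : Matrix (Index A) (Fin n) ℝ
  | .inl i => Fin.tail (A i)
  | .inr (p, q) => (A p 0)⁻¹ • Fin.tail (A p) - (A q 0)⁻¹ • Fin.tail (A q)

noncomputable def rhs (d : ι → ℝ) : Index A → ℝ
  | .inl i => d i
  | .inr (p, q) => d p / A p 0 - d q / A q 0

noncomputable def bound (d : ι → ℝ) (y : Fin n → ℝ) (i : ι) : ℝ :=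
  (d i - Fin.tail (A i) ⬝ᵥ y) / A i 0

variable {A}

theorem mulVec_cons_apply_le_iff_of_pos {d : ι → ℝ} {t : ℝ} {y : Fin n → ℝ} {i : ι}
    (hi : 0 < A i 0) : (A *ᵥ Fin.cons t y) i ≤ d i ↔ t ≤ bound A d y i := by
  rw [mulVec_cons_apply, bound, le_div_iff₀ hi]
  constructor <;> intro h <;> linarith

theorem mulVec_cons_apply_le_iff_of_neg {d : ι → ℝ} {t : ℝ} {y : Fin n → ℝ} {i : ι}
    (hi : A i 0 < 0) : (A *ᵥ Fin.cons t y) i ≤ d i ↔ bound A d y i ≤ t := by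
  rw [mulVec_cons_apply, bound, div_le_iff_of_neg hi]
  constructor <;> intro h <;> linarith

theorem matrix_mulVec_inr_le_iff {d : ι → ℝ} {y : Fin n → ℝ} (p : {i // 0 < A i 0})
    (q : {i // A i 0 < 0}) :
    (matrix A *ᵥ y) (.inr (p, q)) ≤ rhs A d (.inr (p, q)) ↔ bound A d y q ≤ bound A d y p := by
  simp only [mulVec, matrix, rhs, bound, sub_div]
  rw [sub_dotProduct, smul_dotProduct, smul_dotProduct, smul_eq_mul, smul_eq_mul,
    inv_mul_eq_div, inv_mul_eq_div]
  constructor <;> intro h <;> linarith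

theorem matrix_mulVec_tail_le {d : ι → ℝ} {x : Fin (n + 1) → ℝ} (hx : A *ᵥ x ≤ d) :
    matrix A *ᵥ Fin.tail x ≤ rhs A d := by
  rw [← Fin.cons_self_tail x] at hx
  rintro (⟨i, hi⟩ | ⟨p, q⟩)
  · have := hx i
    rwa [mulVec_cons_apply, hi, zero_mul, zero_add] at this
  · exact (matrix_mulVec_inr_le_iff p q).2
      (((mulVec_cons_apply_le_iff_of_neg q.2).1 (hx q)).trans
        ((mulVec_cons_apply_le_iff_of_pos p.2).1 (hx p)))

theorem mulVec_cons_le {d : ι → ℝ} {y : Fin n → ℝ} {t : ℝ} (hy : matrix A *ᵥ y ≤ rhs A d)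
    (hlow : ∀ i, A i 0 < 0 → bound A d y i ≤ t) (hup : ∀ i, 0 < A i 0 → t ≤ bound A d y i) :
    A *ᵥ Fin.cons t y ≤ d := by
  intro i
  rcases lt_trichotomy (A i 0) 0 with hi | hi | hi
  · exact (mulVec_cons_apply_le_iff_of_neg hi).2 (hlow i hi)
  · rw [mulVec_cons_apply, hi, zero_mul, zero_add]
    exact hy (.inl ⟨i, hi⟩)
  · exact (mulVec_cons_apply_le_iff_of_pos hi).2 (hup i hi)

theorem continuous_rhs : Continuous (rhs A) := by
  refine continuous_pi ?_
  rintro (i | ⟨p, q⟩) <;> simp only [rhs] <;> fun_prop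

theorem continuous_bound (i : ι) :
    Continuous fun z : (ι → ℝ) × (Fin n → ℝ) => bound A z.1 z.2 i := by
  unfold bound; fun_prop

theorem eventually_exists_mulVec_cons_le_dist_lt [Finite ι] {x₀ : Fin (n + 1) → ℝ}
    {d₀ : ι → ℝ} (h₀ : A *ᵥ x₀ ≤ d₀)
    (ih : ∀ ε > 0, ∀ᶠ e in 𝓝[{e | ∃ y, matrix A *ᵥ y ≤ e}] rhs A d₀,
      ∃ y, matrix A *ᵥ y ≤ e ∧ dist y (Fin.tail x₀) < ε)
    {ε : ℝ} (hε : 0 < ε) :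
    ∀ᶠ d in 𝓝[{d | ∃ x, A *ᵥ x ≤ d}] d₀, ∃ x, A *ᵥ x ≤ d ∧ dist x x₀ < ε := by
  rw [← Fin.cons_self_tail x₀] at h₀ ⊢
  set y₀ := Fin.tail x₀
  set t₀ := x₀ 0
  have hnear : ∀ᶠ z in 𝓝 (d₀, y₀),
      (∀ i : {i // A i 0 < 0}, bound A z.1 z.2 i < t₀ + ε / 2) ∧
      ∀ i : {i // 0 < A i 0}, t₀ - ε / 2 < bound A z.1 z.2 i := by
    refine (eventually_all.2 fun i => ?_).and (eventually_all.2 fun i => ?_)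
    · refine (continuous_bound i.1).continuousAt.eventually_lt continuousAt_const ?_
      linarith [(mulVec_cons_apply_le_iff_of_neg i.2).1 (h₀ i)]
    · refine continuousAt_const.eventually_lt (continuous_bound i.1).continuousAt ?_
      linarith [(mulVec_cons_apply_le_iff_of_pos i.2).1 (h₀ i)]
  rw [nhds_prod_eq, eventually_prod_iff] at hnear
  obtain ⟨P, hP, R, hR, hPR⟩ := hnear
  obtain ⟨ρ, hρ, hρR⟩ := Metric.eventually_nhds_iff.1 hR
  have hrhs : Tendsto (rhs A) (𝓝[{d | ∃ x, A *ᵥ x ≤ d}] d₀)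
      (𝓝[{e | ∃ y, matrix A *ᵥ y ≤ e}] rhs A d₀) :=
    continuous_rhs.continuousWithinAt.tendsto_nhdsWithin
      fun d ⟨x, hx⟩ => ⟨_, matrix_mulVec_tail_le hx⟩
  filter_upwards [hrhs.eventually (ih _ (lt_min hρ hε)), nhdsWithin_le_nhds hP]
    with d ⟨y, hy, hyy₀⟩ hd
  obtain ⟨hlow, hup⟩ := hPR hd (hρR (hyy₀.trans_le (min_le_left _ _)))
  obtain ⟨t, hlt, htu, htt₀⟩ := exists_forall_le_forall_le_abs_sub_le
    (fun i : {i // A i 0 < 0} => bound A d y i) (fun i : {i // 0 < A i 0} => bound A d y i)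
    (fun q p => (matrix_mulVec_inr_le_iff p q).1 (hy (.inr (p, q)))) (half_pos hε).le
    (fun q => (hlow q).le) (fun p => (hup p).le)
  refine ⟨Fin.cons t y, mulVec_cons_le hy (fun i hi => hlt ⟨i, hi⟩) (fun i hi => htu ⟨i, hi⟩),
    (dist_pi_lt_iff hε).2 fun j => ?_⟩
  refine Fin.cases ?_ (fun j => ?_) j
  · simp only [Fin.cons_zero, Real.dist_eq]
    linarith
  · simp only [Fin.cons_succ]
    exact (dist_le_pi_dist y y₀ j).trans_lt (hyy₀.trans_le (min_le_right _ _))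

end FourierMotzkin

end

theorem eventually_exists_mulVec_le_dist_lt {ι : Type*} [Finite ι] {n : ℕ}
    (A : Matrix ι (Fin n) ℝ) {x₀ : Fin n → ℝ} {d₀ : ι → ℝ} (h₀ : A *ᵥ x₀ ≤ d₀) {ε : ℝ}
    (hε : 0 < ε) : ∀ᶠ d in 𝓝[{d | ∃ x, A *ᵥ x ≤ d}] d₀, ∃ x, A *ᵥ x ≤ d ∧ dist x x₀ < ε := by
  induction n generalizing ι ε with
  | zero =>
    refine eventually_nhdsWithin_of_forall fun d ⟨x, hx⟩ => ⟨x, hx, ?_⟩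
    rw [Subsingleton.elim x x₀, dist_self]
    exact hε
  | succ n ih =>
    exact FourierMotzkin.eventually_exists_mulVec_cons_le_dist_lt h₀
      (fun ε hε => ih _ (FourierMotzkin.matrix_mulVec_tail_le h₀) hε) hε

section
variable {ι : Type*} [Fintype ι]

theorem abs_dotProduct_le_sum_abs_mul_norm (c x : ι → ℝ) : |c ⬝ᵥ x| ≤ (∑ i, |c i|) * ‖x‖ :=
  calc |c ⬝ᵥ x| ≤ ∑ i, |c i * x i| := Finset.abs_sum_le_sum_abs _ _
    _ ≤ ∑ i, |c i| * ‖x‖ := Finset.sum_le_sum fun i _ => by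
        rw [abs_mul]; gcongr; exact norm_le_pi_norm x i
    _ = (∑ i, |c i|) * ‖x‖ := (Finset.sum_mul _ _ _).symm

theorem Matrix.PosDef.exists_pos_mul_norm_sq_le {Q : Matrix ι ι ℝ} (hQ : Q.PosDef) :
    ∃ μ > 0, ∀ v : ι → ℝ, μ * ‖v‖ ^ 2 ≤ v ⬝ᵥ Q *ᵥ v := by
  have hunit : ∀ v : ι → ℝ, v ≠ 0 → ‖v‖⁻¹ • v ∈ Metric.sphere (0 : ι → ℝ) 1 := fun v hv =>
    mem_sphere_zero_iff_norm.2 (norm_smul_inv_norm (𝕜 := ℝ) hv)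
  rcases (Metric.sphere (0 : ι → ℝ) 1).eq_empty_or_nonempty with hS | hS
  · refine ⟨1, one_pos, fun v => ?_⟩
    obtain rfl : v = 0 := by_contra fun hv => hS.subset (hunit v hv)
    simp
  obtain ⟨v₀, hv₀, hmin⟩ := (isCompact_sphere 0 1).exists_isMinOn hS
    (show Continuous fun v : ι → ℝ => v ⬝ᵥ Q *ᵥ v by fun_prop).continuousOn
  refine ⟨_, by simpa using hQ.dotProduct_mulVec_pos (ne_zero_of_mem_unit_sphere ⟨v₀, hv₀⟩),
    fun v => ?_⟩
  rcases eq_or_ne v 0 with rfl | hv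
  · simp
  have h : v₀ ⬝ᵥ Q *ᵥ v₀ ≤ (‖v‖⁻¹ • v) ⬝ᵥ Q *ᵥ (‖v‖⁻¹ • v) := hmin (hunit v hv)
  rw [mulVec_smul, dotProduct_smul, smul_dotProduct, smul_eq_mul, smul_eq_mul] at h
  have hpos : 0 < ‖v‖ := norm_pos_iff.2 hv
  calc _ ≤ ‖v‖ ^ 2 * (‖v‖⁻¹ * (‖v‖⁻¹ * (v ⬝ᵥ Q *ᵥ v))) := by
        rw [mul_comm]; gcongr
    _ = _ := by field_simp

noncomputable def qpCost (Q : Matrix ι ι ℝ) (c x : ι → ℝ) : ℝ := 1 / 2 * (x ⬝ᵥ Q *ᵥ x) + c ⬝ᵥ x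

theorem continuous_qpCost (Q : Matrix ι ι ℝ) (c : ι → ℝ) : Continuous (qpCost Q c) := by
  unfold qpCost; fun_prop

theorem exists_norm_le_of_qpCost_le {Q : Matrix ι ι ℝ} (hQ : Q.PosDef) (c : ι → ℝ) (M : ℝ) :
    ∃ R, ∀ x, qpCost Q c x ≤ M → ‖x‖ ≤ R := by
  obtain ⟨μ, hμ, hQμ⟩ := hQ.exists_pos_mul_norm_sq_le
  refine ⟨max 1 (2 * (∑ i, |c i| + |M|) / μ), fun x hx => ?_⟩
  rcases le_or_gt ‖x‖ 1 with h1 | h1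
  · exact le_max_of_le_left h1
  refine le_max_of_le_right ((le_div_iff₀ hμ).2 ?_)
  have hquad := hQμ x
  have hlin := (neg_abs_le (c ⬝ᵥ x)).trans'
    (neg_le_neg (abs_dotProduct_le_sum_abs_mul_norm c x))
  have hM : M ≤ |M| * ‖x‖ := (le_abs_self M).trans (le_mul_of_one_le_right (abs_nonneg M) h1.le)
  unfold qpCost at hx
  nlinarith

theorem mul_qpCost_add_mul_qpCost_sub_qpCost (Q : Matrix ι ι ℝ) (c x y : ι → ℝ) {a b : ℝ}
    (hab : a + b = 1) :
    a * qpCost Q c x + b * qpCost Q c y - qpCost Q c (a • x + b • y) =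
      a * b / 2 * ((x - y) ⬝ᵥ Q *ᵥ (x - y)) := by
  obtain rfl : b = 1 - a := by linarith
  simp only [qpCost, mulVec_add, mulVec_sub, mulVec_smul, dotProduct_add, dotProduct_sub,
    add_dotProduct, sub_dotProduct, dotProduct_smul, smul_dotProduct, smul_eq_mul]
  ring

theorem Matrix.PosDef.strictConvexOn_qpCost {Q : Matrix ι ι ℝ} (hQ : Q.PosDef) (c : ι → ℝ) :
    StrictConvexOn ℝ univ (qpCost Q c) := by
  refine ⟨convex_univ, fun x _ y _ hxy a b ha hb hab => ?_⟩
  have hpos : 0 < (x - y) ⬝ᵥ Q *ᵥ (x - y) := by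
    simpa using hQ.dotProduct_mulVec_pos (sub_ne_zero.2 hxy)
  have := mul_qpCost_add_mul_qpCost_sub_qpCost Q c x y hab
  simp only [smul_eq_mul]
  nlinarith [mul_pos (mul_pos ha hb) hpos]

end

theorem MapClusterPt.le_of_eventually_le {α X : Type*} [TopologicalSpace X] {l : Filter α}
    {u : α → X} {z : X} (hz : MapClusterPt z l u) {g : X → ℝ} (hg : ContinuousAt g z)
    {h : α → ℝ} {c : ℝ} (hh : Tendsto h l (𝓝 c)) (hgh : ∀ᶠ a in l, g (u a) ≤ h a) :
    g z ≤ c := by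
  by_contra! hcz
  have hg' : ∀ᶠ x in 𝓝 z, (g z + c) / 2 < g x := hg.eventually (lt_mem_nhds (by linarith))
  have hh' : ∀ᶠ a in l, h a < (g z + c) / 2 := hh.eventually (gt_mem_nhds (by linarith))
  obtain ⟨a, hga, hah, hgh⟩ := ((hz.frequently hg').and_eventually (hh'.and hgh)).exists
  linarith

theorem convex_setOf_mulVec_le {ι κ : Type*} [Fintype κ] (A : Matrix ι κ ℝ) (d : ι → ℝ) :
    Convex ℝ {x | A *ᵥ x ≤ d} :=
  (convex_Iic d).linear_preimage (mulVecLin A)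

/-- Continuity of the optimal solution of the parametric QP
`min (1/2)xᵀQx + cᵀx s.t. Fx ≤ b + Eθ` with `Q` symmetric positive definite:
if `xstar θ` is a (necessarily unique) global minimizer for every `θ` in the set
`Θ_feas` of parameters with nonempty feasible set, then `θ ↦ xstar θ` is continuous
on `Θ_feas`. -/
theorem stmt_6 {n k p : ℕ} (Q : Matrix (Fin n) (Fin n) ℝ) (hQ : Q.PosDef)
    (c : Fin n → ℝ) (F : Matrix (Fin k) (Fin n) ℝ) (b : Fin k → ℝ)
    (E : Matrix (Fin k) (Fin p) ℝ)
    (Θfeas : Set (Fin p → ℝ))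
    (hΘfeas : Θfeas = {θ | ∃ x : Fin n → ℝ, F *ᵥ x ≤ b + E *ᵥ θ})
    (xstar : (Fin p → ℝ) → (Fin n → ℝ))
    (hxstar : ∀ θ ∈ Θfeas,
      F *ᵥ xstar θ ≤ b + E *ᵥ θ ∧
      ∀ x : Fin n → ℝ, F *ᵥ x ≤ b + E *ᵥ θ →
        (1 / 2) * (xstar θ ⬝ᵥ (Q *ᵥ xstar θ)) + c ⬝ᵥ xstar θ ≤
          (1 / 2) * (x ⬝ᵥ (Q *ᵥ x)) + c ⬝ᵥ x) :
    ContinuousOn xstar Θfeas := by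
  subst hΘfeas
  intro θ₀ hθ₀
  set f := qpCost Q c
  set x₀ := xstar θ₀
  have hd : Continuous fun θ => b + E *ᵥ θ := by fun_prop
  have hfeasible : ∀ ε > 0, ∀ᶠ θ in 𝓝[{θ | ∃ x, F *ᵥ x ≤ b + E *ᵥ θ}] θ₀,
      ∃ y, F *ᵥ y ≤ b + E *ᵥ θ ∧ dist y x₀ < ε := fun ε hε =>
    (hd.continuousWithinAt.tendsto_nhdsWithin fun θ hθ => hθ).eventually
      (eventually_exists_mulVec_le_dist_lt F (hxstar θ₀ hθ₀).1 hε)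
  have hvalue : ∀ η > 0, ∀ᶠ θ in 𝓝[{θ | ∃ x, F *ᵥ x ≤ b + E *ᵥ θ}] θ₀,
      f (xstar θ) < f x₀ + η := by
    intro η hη
    obtain ⟨ε, hε, hfε⟩ := Metric.continuousAt_iff.1 (continuous_qpCost Q c).continuousAt η hη
    filter_upwards [hfeasible ε hε, self_mem_nhdsWithin] with θ ⟨y, hy, hyx₀⟩ hθ
    calc f (xstar θ) ≤ f y := (hxstar θ hθ).2 y hy
      _ < f x₀ + η := by linarith [(abs_sub_lt_iff.1 (hfε hyx₀)).1]
  obtain ⟨R, hR⟩ := exists_norm_le_of_qpCost_le hQ c (f x₀ + 1)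
  refine (isCompact_closedBall 0 R).tendsto_nhds_of_unique_mapClusterPt
    ((hvalue 1 one_pos).mono fun θ hθ => mem_closedBall_zero_iff.2 (hR _ hθ.le)) fun z _ hz => ?_
  have hzfeas : F *ᵥ z ≤ b + E *ᵥ θ₀ := fun i =>
    hz.le_of_eventually_le (g := fun x => (F *ᵥ x) i) (by fun_prop)
      ((continuous_apply i).comp hd).continuousWithinAt
      (eventually_nhdsWithin_of_forall fun θ hθ => (hxstar θ hθ).1 i)
  have hzmin : f z ≤ f x₀ := le_of_forall_pos_le_add fun η hη =>
    hz.le_of_eventually_le (continuous_qpCost Q c).continuousAt tendsto_const_nhds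
      ((hvalue η hη).mono fun _ h => h.le)
  have hconvex := (hQ.strictConvexOn_qpCost c).subset (subset_univ _)
    (convex_setOf_mulVec_le F (b + E *ᵥ θ₀))
  exact hconvex.eq_of_isMinOn (fun y hy => hzmin.trans ((hxstar θ₀ hθ₀).2 y hy))
    (fun y hy => (hxstar θ₀ hθ₀).2 y hy) hzfeas (hxstar θ₀ hθ₀).1
end

section
/- Let κ > 0, ρ > 0, and let V ∈ ℝ^{p×p} be symmetric with spectral decomposition V = U Γ Uᵀ, where U is orthogonal and Γ = diag(γ₁, …, γ_p). Then the function B ↦ −κ log det B + (ρ/2)‖B − V‖_F², over symmetric positive definite p×p matrices B, has a unique global minimizer B* = U Γ* Uᵀ, where Γ* = diag(γ*₁, …, γ*_p) with γ*ᵢ = (γᵢ + √(γᵢ² + 4κ/ρ))/2. In matrix form, B* = (1/2) U (Γ + (Γ² + (4κ/ρ) I)^{1/2}) Uᵀ. -/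
/-!
`B* = U Γ* Uᵀ` is a stationary point of the objective, `ρ (B* − V) = κ B*⁻¹`: both sides are
diagonalised by `U`, and `γ*ᵢ` is the positive root of `ρ x (x − γᵢ) = κ`. At a stationary point,
the concavity of `log det`, i.e. `log det B ≤ log det B* + tr (B*⁻¹ (B − B*))`, together with the
exact expansion of the Frobenius term gives `f B ≥ f B* + (ρ/2) ‖B − B*‖_F²`.
-/

open Matrix

namespace Matrix

theorem sum_sum_mul_eq_trace_transpose_mul {m n R : Type*} [Fintype m] [Fintype n]
    [CommSemiring R] (A B : Matrix m n R) : ∑ i, ∑ j, A i j * B i j = (Aᵀ * B).trace := by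
  simp only [trace, diag, mul_apply, transpose_apply]
  exact Finset.sum_comm

theorem sum_sum_sq_sub_eq {m n R : Type*} [Fintype m] [Fintype n] [CommRing R]
    (A B V : Matrix m n R) :
    ∑ i, ∑ j, (B i j - V i j) ^ 2 = ∑ i, ∑ j, (A i j - V i j) ^ 2
      + 2 * ∑ i, ∑ j, (A - V) i j * (B - A) i j + ∑ i, ∑ j, (B i j - A i j) ^ 2 := by
  simp only [Finset.mul_sum, ← Finset.sum_add_distrib, sub_apply]
  exact Finset.sum_congr rfl fun i _ => Finset.sum_congr rfl fun j _ => by ring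

theorem sum_sum_sq_sub_pos {m n R : Type*} [Fintype m] [Fintype n] [CommRing R] [LinearOrder R]
    [IsStrictOrderedRing R] {A B : Matrix m n R} (hne : B ≠ A) :
    0 < ∑ i, ∑ j, (B i j - A i j) ^ 2 := by
  obtain ⟨i, j, hij⟩ : ∃ i j, B i j ≠ A i j := by
    by_contra! h
    exact hne (Matrix.ext h)
  refine Finset.sum_pos' (fun i _ => Finset.sum_nonneg fun j _ => sq_nonneg _)
    ⟨i, Finset.mem_univ _, Finset.sum_pos' (fun j _ => sq_nonneg _) ⟨j, Finset.mem_univ _, ?_⟩⟩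
  exact sq_pos_of_ne_zero (sub_ne_zero.mpr hij)

variable {n : Type*} [Fintype n] [DecidableEq n]

theorem PosDef.log_det_le_trace_sub_card {M : Matrix n n ℝ} (hM : M.PosDef) :
    Real.log M.det ≤ M.trace - Fintype.card n := by
  have hpos := hM.eigenvalues_pos
  rw [hM.isHermitian.det_eq_prod_eigenvalues, hM.isHermitian.trace_eq_sum_eigenvalues]
  simp only [RCLike.ofReal_real_eq_id, id_eq]
  rw [Real.log_prod fun i _ => (hpos i).ne', ← Finset.card_univ, ← nsmul_one, ← Finset.sum_const,
    ← Finset.sum_sub_distrib]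
  exact Finset.sum_le_sum fun i _ => Real.log_le_sub_one_of_pos (hpos i)

open scoped MatrixOrder in
/-- Writing `A⁻¹ = Yᴴ Y`, this is `log det M ≤ tr M − n` for `M = Y B Yᴴ`. -/
theorem PosDef.log_det_le_log_det_add_trace_inv_mul_sub_card {A B : Matrix n n ℝ}
    (hA : A.PosDef) (hB : B.PosDef) :
    Real.log B.det ≤ Real.log A.det + (A⁻¹ * B).trace - Fintype.card n := by
  obtain ⟨Y, hY, hAinv⟩ :=
    CStarAlgebra.isStrictlyPositive_iff_eq_star_mul_self.mp hA.inv.isStrictlyPositive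
  have hM : (Y * B * Yᴴ).PosDef :=
    hB.mul_mul_conjTranspose_same (vecMul_injective_iff_isUnit.mpr hY)
  have hdet : (Y * B * Yᴴ).det = B.det * A.det⁻¹ := by
    rw [← Ring.inverse_eq_inv', ← det_nonsing_inv, hAinv, star_eq_conjTranspose, det_mul, det_mul,
      det_mul]
    ring
  have htrace : (Y * B * Yᴴ).trace = (A⁻¹ * B).trace := by
    rw [trace_mul_cycle, hAinv, star_eq_conjTranspose]
  have hlog := hM.log_det_le_trace_sub_card
  rw [hdet, htrace, Real.log_mul hB.det_pos.ne' (inv_ne_zero hA.det_pos.ne'), Real.log_inv]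
    at hlog
  linarith

section Orthogonal

variable {U : Matrix n n ℝ}

theorem conj_diagonal_mul_conj_diagonal (hU : Uᵀ * U = 1) (a b : n → ℝ) :
    U * diagonal a * Uᵀ * (U * diagonal b * Uᵀ) = U * diagonal (a * b) * Uᵀ := by
  simp only [Matrix.mul_assoc]
  rw [← Matrix.mul_assoc Uᵀ, hU, Matrix.one_mul, ← Matrix.mul_assoc (diagonal a),
    diagonal_mul_diagonal]
  rfl

theorem inv_conj_diagonal (hU : Uᵀ * U = 1) {a : n → ℝ} (ha : ∀ i, a i ≠ 0) :
    (U * diagonal a * Uᵀ)⁻¹ = U * diagonal a⁻¹ * Uᵀ := by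
  refine inv_eq_left_inv ?_
  have hinv : a⁻¹ * a = 1 := funext fun i => inv_mul_cancel₀ (ha i)
  rw [conj_diagonal_mul_conj_diagonal hU, hinv, Pi.one_def, diagonal_one, Matrix.mul_one,
    mul_eq_one_comm.mp hU]

theorem posDef_conj_diagonal (hU : Uᵀ * U = 1) {a : n → ℝ} (ha : ∀ i, 0 < a i) :
    (U * diagonal a * Uᵀ).PosDef := by
  simpa only [conjTranspose_eq_transpose_of_trivial] using
    (PosDef.diagonal ha).mul_mul_conjTranspose_same
      (vecMul_injective_iff_isUnit.mpr (IsUnit.of_mul_eq_one_right Uᵀ hU))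

theorem smul_sub_conj_diagonal_eq_smul_inv (hU : Uᵀ * U = 1) {κ ρ : ℝ} {a b : n → ℝ}
    (ha : ∀ i, a i ≠ 0)
    (hab : ∀ i, ρ * (a i - b i) = κ * (a i)⁻¹) :
    ρ • (U * diagonal a * Uᵀ - U * diagonal b * Uᵀ) = κ • (U * diagonal a * Uᵀ)⁻¹ := by
  rw [inv_conj_diagonal hU ha, ← Matrix.sub_mul, ← Matrix.mul_sub, ← Matrix.smul_mul,
    ← Matrix.mul_smul, ← Matrix.smul_mul, ← Matrix.mul_smul, diagonal_sub, ← diagonal_smul,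
    ← diagonal_smul]
  congr 3
  funext i
  exact hab i

end Orthogonal

end Matrix

theorem add_sqrt_sq_add_pos {γ c : ℝ} (hc : 0 < c) : 0 < γ + √(γ ^ 2 + c) := by
  have : |γ| < √(γ ^ 2 + c) := by
    rw [← Real.sqrt_sq_eq_abs]
    exact Real.sqrt_lt_sqrt (sq_nonneg _) (by linarith)
  linarith [neg_abs_le γ]

theorem mul_sub_mul_half_add_sqrt {γ κ ρ : ℝ} (hκ : 0 ≤ κ) (hρ : 0 < ρ) :
    ρ * ((γ + √(γ ^ 2 + 4 * κ / ρ)) / 2 - γ) * ((γ + √(γ ^ 2 + 4 * κ / ρ)) / 2) = κ := by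
  have hsq := Real.sq_sqrt (by positivity : 0 ≤ γ ^ 2 + 4 * κ / ρ)
  have hρκ : ρ * (4 * κ / ρ) = 4 * κ := mul_div_cancel₀ _ hρ.ne'
  linear_combination ρ / 4 * hsq + hρκ / 4

section LogDetProx

variable {n : Type*} [Fintype n] [DecidableEq n]

noncomputable def logDetProx (κ ρ : ℝ) (V B : Matrix n n ℝ) : ℝ :=
  -κ * Real.log B.det + ρ / 2 * ∑ i, ∑ j, (B i j - V i j) ^ 2

variable {κ ρ : ℝ} {A B V : Matrix n n ℝ}

theorem logDetProx_add_le_of_stationary (hκ : 0 ≤ κ) (hA : A.PosDef) (hB : B.PosDef)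
    (hstat : ρ • (A - V) = κ • A⁻¹) :
    logDetProx κ ρ V A + ρ / 2 * ∑ i, ∑ j, (B i j - A i j) ^ 2 ≤ logDetProx κ ρ V B := by
  have hcross : ρ * ∑ i, ∑ j, (A - V) i j * (B - A) i j
      = κ * ((A⁻¹ * B).trace - Fintype.card n) := by
    have hAinv : A⁻¹ᵀ = A⁻¹ := hA.inv.isHermitian.eq
    calc ρ * ∑ i, ∑ j, (A - V) i j * (B - A) i j
        = ∑ i, ∑ j, (ρ • (A - V)) i j * (B - A) i j := by
          simp only [Finset.mul_sum, Matrix.smul_apply, smul_eq_mul, mul_assoc]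
      _ = κ * (A⁻¹ * (B - A)).trace := by
          rw [hstat, sum_sum_mul_eq_trace_transpose_mul, transpose_smul, hAinv, smul_mul,
            trace_smul, smul_eq_mul]
      _ = κ * ((A⁻¹ * B).trace - Fintype.card n) := by
          rw [mul_sub, nonsing_inv_mul _ hA.det_pos.ne'.isUnit, trace_sub, trace_one]
  have hlog := hA.log_det_le_log_det_add_trace_inv_mul_sub_card hB
  unfold logDetProx
  rw [sum_sum_sq_sub_eq A B V]
  nlinarith [mul_le_mul_of_nonneg_left hlog hκ]

theorem logDetProx_lt_of_stationary (hκ : 0 ≤ κ) (hρ : 0 < ρ) (hA : A.PosDef) (hB : B.PosDef)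
    (hstat : ρ • (A - V) = κ • A⁻¹) (hne : B ≠ A) :
    logDetProx κ ρ V A < logDetProx κ ρ V B := by
  have hgrowth := logDetProx_add_le_of_stationary hκ hA hB hstat
  have hdist := sum_sum_sq_sub_pos hne
  nlinarith

end LogDetProx

theorem stmt_15_general {p : ℕ} (κ ρ : ℝ) (hκ : 0 < κ) (hρ : 0 < ρ)
    (V U : Matrix (Fin p) (Fin p) ℝ) (γ : Fin p → ℝ)
    (hU : U * Uᵀ = 1 ∧ Uᵀ * U = 1)
    (hV : V = U * Matrix.diagonal γ * Uᵀ)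
    (f : Matrix (Fin p) (Fin p) ℝ → ℝ)
    (hf : ∀ B, f B = -κ * Real.log B.det
      + (ρ / 2) * (∑ i, ∑ j, (B i j - V i j) ^ 2))
    (Bstar : Matrix (Fin p) (Fin p) ℝ)
    (hBstar : Bstar =
      U * Matrix.diagonal (fun i => (γ i + Real.sqrt ((γ i) ^ 2 + 4 * κ / ρ)) / 2) * Uᵀ) :
    Bstar.PosDef ∧
    ∀ B : Matrix (Fin p) (Fin p) ℝ, B.IsSymm → B.PosDef → B ≠ Bstar →
      f Bstar < f B := by
  have hγstar_pos : ∀ i, 0 < (γ i + √(γ i ^ 2 + 4 * κ / ρ)) / 2 :=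
    fun i => half_pos (add_sqrt_sq_add_pos (by positivity))
  have hBstar_posDef : Bstar.PosDef := hBstar ▸ posDef_conj_diagonal hU.2 hγstar_pos
  have hstat : ρ • (Bstar - V) = κ • Bstar⁻¹ := by
    rw [hBstar, hV]
    exact smul_sub_conj_diagonal_eq_smul_inv hU.2 (fun i => (hγstar_pos i).ne') fun i =>
      (eq_mul_inv_iff_mul_eq₀ (hγstar_pos i).ne').mpr (mul_sub_mul_half_add_sqrt hκ.le hρ)
  have hf_eq : f = logDetProx κ ρ V := funext hf
  refine ⟨hBstar_posDef, fun B _ hB hne => ?_⟩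
  rw [hf_eq]
  exact logDetProx_lt_of_stationary hκ.le hρ hBstar_posDef hB hstat hne

/-- Log-determinant proximal step: for `κ, ρ > 0` and a symmetric `V = UΓUᵀ` with `U`
orthogonal and `Γ = diag(γ)`, the function `B ↦ −κ log det B + (ρ/2)‖B − V‖_F²` over
symmetric positive definite matrices has the unique global minimizer
`B* = UΓ*Uᵀ` with `Γ* = diag((γᵢ + √(γᵢ² + 4κ/ρ))/2)`. -/
theorem stmt_15 {p : ℕ} (κ ρ : ℝ) (hκ : 0 < κ) (hρ : 0 < ρ)
    (V U : Matrix (Fin p) (Fin p) ℝ) (γ : Fin p → ℝ)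
    (hVsymm : V.IsSymm)
    (hU : U * Uᵀ = 1 ∧ Uᵀ * U = 1)
    (hV : V = U * Matrix.diagonal γ * Uᵀ)
    (f : Matrix (Fin p) (Fin p) ℝ → ℝ)
    (hf : ∀ B, f B = -κ * Real.log B.det
      + (ρ / 2) * (∑ i, ∑ j, (B i j - V i j) ^ 2))
    (Bstar : Matrix (Fin p) (Fin p) ℝ)
    (hBstar : Bstar =
      U * Matrix.diagonal (fun i => (γ i + Real.sqrt ((γ i) ^ 2 + 4 * κ / ρ)) / 2) * Uᵀ) :
    Bstar.PosDef ∧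
    ∀ B : Matrix (Fin p) (Fin p) ℝ, B.IsSymm → B.PosDef → B ≠ Bstar →
      f Bstar < f B :=
  stmt_15_general κ ρ hκ hρ V U γ hU hV f hf Bstar hBstar
end

section
/- Let Π ∈ ℝ^{p×T}, C₁, C₂ ∈ ℝ^{p×p}, C₃ ∈ ℝ^{p×T}, G ∈ ℝ^{p×p}, and ρ, κ > 0. Then the matrix 2I + ΠΠᵀ ∈ ℝ^{p×p} is symmetric positive definite (hence invertible), and the function f(X) = (ρ/2)(‖X − C₁‖_F² + ‖X − C₂‖_F² + ‖XΠ − C₃‖_F²) + κ·tr(XG) over X ∈ ℝ^{p×p} has the unique global minimizer X* = (C₁ + C₂ + C₃Πᵀ − (κ/ρ)Gᵀ)(2I + ΠΠᵀ)⁻¹. -/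
/-!
The objective is a quadratic in `X`: expanding at `X* + Y` gives
`f (X* + Y) = f X* + (ρ/2)(2‖Y‖_F² + ‖YΠ‖_F²) + ⟪Y, ∇f X*⟫` with
`∇f X* = ρ (X* (2I + ΠΠᵀ) − C₁ − C₂ − C₃Πᵀ) + κ Gᵀ`, which vanishes by the choice of `X*`.
So `f (X* + Y) − f X* ≥ ρ ‖Y‖_F² > 0` for `Y ≠ 0`.
-/

open Matrix

namespace Matrix

variable {m n R : Type*} [Fintype m] [Fintype n]

theorem trace_mul_transpose_self [CommSemiring R] (A : Matrix m n R) :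
    trace (A * Aᵀ) = ∑ i, ∑ j, A i j ^ 2 := by
  simp [trace, mul_apply, sq]

theorem trace_mul_transpose_comm [CommSemiring R] (A B : Matrix m n R) :
    trace (B * Aᵀ) = trace (A * Bᵀ) := by
  rw [← trace_transpose, transpose_mul, transpose_transpose]

theorem trace_add_mul_transpose_add [CommSemiring R] (A B : Matrix m n R) :
    trace ((A + B) * (A + B)ᵀ) = trace (A * Aᵀ) + 2 * trace (A * Bᵀ) + trace (B * Bᵀ) := by
  rw [transpose_add, Matrix.add_mul, Matrix.mul_add, Matrix.mul_add, trace_add, trace_add,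
    trace_add, trace_mul_transpose_comm A B]
  ring

theorem trace_mul_transpose_self_pos {A : Matrix m n ℝ} (hA : A ≠ 0) :
    0 < trace (A * Aᵀ) := by
  have hnonneg := (posSemidef_self_mul_conjTranspose A).trace_nonneg
  have hne := (trace_mul_conjTranspose_self_eq_zero_iff (A := A)).not.mpr hA
  rw [conjTranspose_eq_transpose_of_trivial] at hnonneg hne
  exact lt_of_le_of_ne hnonneg (Ne.symm hne)

theorem posDef_smul_one_add_mul_transpose [DecidableEq m] {c : ℝ} (hc : 0 < c)
    (P : Matrix m n ℝ) : (c • (1 : Matrix m m ℝ) + P * Pᵀ).PosDef := by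
  have hP := posSemidef_self_mul_conjTranspose P
  rw [conjTranspose_eq_transpose_of_trivial] at hP
  exact (PosDef.one.smul hc).add_posSemidef hP

end Matrix

section Objective

variable {m n : Type*} [Fintype m] [Fintype n] [DecidableEq m]
  (ρ κ : ℝ) (C₁ C₂ G : Matrix m m ℝ) (P C₃ : Matrix m n ℝ)

/-- The objective of the `B⁽¹⁾`-update, with `‖A‖_F²` written as `trace (A * Aᵀ)`. -/
noncomputable def admmObjective (X : Matrix m m ℝ) : ℝ :=
  ρ / 2 * (trace ((X - C₁) * (X - C₁)ᵀ) + trace ((X - C₂) * (X - C₂)ᵀ)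
    + trace ((X * P - C₃) * (X * P - C₃)ᵀ)) + κ * trace (X * G)

theorem admmObjective_add (X Y : Matrix m m ℝ) :
    admmObjective ρ κ C₁ C₂ G P C₃ (X + Y) = admmObjective ρ κ C₁ C₂ G P C₃ X
      + ρ / 2 * (2 * trace (Y * Yᵀ) + trace ((Y * P) * (Y * P)ᵀ))
      + trace (Y * (ρ • (X * ((2 : ℝ) • 1 + P * Pᵀ) - (C₁ + C₂ + C₃ * Pᵀ)) + κ • Gᵀ)ᵀ) := by
  have hgrad : trace (Y * (ρ • (X * ((2 : ℝ) • 1 + P * Pᵀ) - (C₁ + C₂ + C₃ * Pᵀ)) + κ • Gᵀ)ᵀ)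
      = ρ * (trace (Y * (X - C₁)ᵀ) + trace (Y * (X - C₂)ᵀ) + trace (Y * P * (X * P - C₃)ᵀ))
        + κ * trace (Y * G) := by
    simp only [transpose_add, transpose_sub, transpose_smul, transpose_mul, transpose_transpose,
      Matrix.mul_add, Matrix.mul_sub, Matrix.mul_smul, mul_one, trace_add, trace_sub,
      trace_smul, smul_eq_mul, ← Matrix.mul_assoc]
    ring
  have h₁ : X + Y - C₁ = Y + (X - C₁) := by abel
  have h₂ : X + Y - C₂ = Y + (X - C₂) := by abel
  have h₃ : (X + Y) * P - C₃ = Y * P + (X * P - C₃) := by rw [Matrix.add_mul]; abel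
  rw [hgrad, admmObjective, admmObjective, h₁, h₂, h₃, trace_add_mul_transpose_add,
    trace_add_mul_transpose_add, trace_add_mul_transpose_add, add_mul, trace_add]
  ring

theorem admmObjective_lt_of_ne {Xs X : Matrix m m ℝ} (hρ : 0 < ρ)
    (hXs : Xs * ((2 : ℝ) • 1 + P * Pᵀ) = C₁ + C₂ + C₃ * Pᵀ - (κ / ρ) • Gᵀ) (hX : X ≠ Xs) :
    admmObjective ρ κ C₁ C₂ G P C₃ Xs < admmObjective ρ κ C₁ C₂ G P C₃ X := by
  have hgrad : ρ • (Xs * ((2 : ℝ) • 1 + P * Pᵀ) - (C₁ + C₂ + C₃ * Pᵀ)) + κ • Gᵀ = 0 := by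
    rw [hXs, sub_sub_cancel_left, smul_neg, smul_smul, mul_div_cancel₀ _ hρ.ne', neg_add_cancel]
  have hY : X - Xs ≠ 0 := sub_ne_zero.mpr hX
  have hexpand := admmObjective_add ρ κ C₁ C₂ G P C₃ Xs (X - Xs)
  rw [add_sub_cancel, hgrad, transpose_zero, Matrix.mul_zero, trace_zero, add_zero] at hexpand
  rw [hexpand, lt_add_iff_pos_right]
  have hpos := trace_mul_transpose_self_pos hY
  have hnonneg := ((posSemidef_self_mul_conjTranspose ((X - Xs) * P))).trace_nonneg
  rw [conjTranspose_eq_transpose_of_trivial] at hnonneg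
  positivity

end Objective

theorem stmt_16_general {p T : ℕ} (Pmat : Matrix (Fin p) (Fin T) ℝ)
    (C₁ C₂ G : Matrix (Fin p) (Fin p) ℝ) (C₃ : Matrix (Fin p) (Fin T) ℝ)
    (ρ κ : ℝ) (hρ : 0 < ρ)
    (f : Matrix (Fin p) (Fin p) ℝ → ℝ)
    (hf : ∀ X, f X = (ρ / 2) * ((∑ i, ∑ j, (X i j - C₁ i j) ^ 2)
        + (∑ i, ∑ j, (X i j - C₂ i j) ^ 2)
        + (∑ i, ∑ j, ((X * Pmat) i j - C₃ i j) ^ 2))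
      + κ * Matrix.trace (X * G))
    (Xstar : Matrix (Fin p) (Fin p) ℝ)
    (hXstar : Xstar = (C₁ + C₂ + C₃ * Pmatᵀ - (κ / ρ) • Gᵀ)
      * ((2 : ℝ) • (1 : Matrix (Fin p) (Fin p) ℝ) + Pmat * Pmatᵀ)⁻¹) :
    ((2 : ℝ) • (1 : Matrix (Fin p) (Fin p) ℝ) + Pmat * Pmatᵀ).PosDef ∧
    ∀ X : Matrix (Fin p) (Fin p) ℝ, X ≠ Xstar → f Xstar < f X := by
  have hA := posDef_smul_one_add_mul_transpose two_pos Pmat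
  have hXs : Xstar * ((2 : ℝ) • 1 + Pmat * Pmatᵀ) = C₁ + C₂ + C₃ * Pmatᵀ - (κ / ρ) • Gᵀ := by
    rw [hXstar, Matrix.mul_assoc, nonsing_inv_mul _ hA.det_pos.ne'.isUnit, Matrix.mul_one]
  have hf' : ∀ X, f X = admmObjective ρ κ C₁ C₂ G Pmat C₃ X := fun X => by
    simp only [hf, admmObjective, trace_mul_transpose_self, Matrix.sub_apply]
  refine ⟨hA, fun X hX => ?_⟩
  rw [hf', hf']
  exact admmObjective_lt_of_ne ρ κ C₁ C₂ G Pmat C₃ hρ hXs hX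

/-- The B⁽¹⁾-update of the ADMM topology-recovery algorithm: `2I + PmatPmatᵀ` is symmetric
positive definite, and the function
`f(X) = (ρ/2)(‖X − C₁‖_F² + ‖X − C₂‖_F² + ‖XPmat − C₃‖_F²) + κ·tr(XG)` has the unique
global minimizer `X* = (C₁ + C₂ + C₃Pmatᵀ − (κ/ρ)Gᵀ)(2I + PmatPmatᵀ)⁻¹`. -/
theorem stmt_16 {p T : ℕ} (Pmat : Matrix (Fin p) (Fin T) ℝ)
    (C₁ C₂ G : Matrix (Fin p) (Fin p) ℝ) (C₃ : Matrix (Fin p) (Fin T) ℝ)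
    (ρ κ : ℝ) (hρ : 0 < ρ) (hκ : 0 < κ)
    (f : Matrix (Fin p) (Fin p) ℝ → ℝ)
    (hf : ∀ X, f X = (ρ / 2) * ((∑ i, ∑ j, (X i j - C₁ i j) ^ 2)
        + (∑ i, ∑ j, (X i j - C₂ i j) ^ 2)
        + (∑ i, ∑ j, ((X * Pmat) i j - C₃ i j) ^ 2))
      + κ * Matrix.trace (X * G))
    (Xstar : Matrix (Fin p) (Fin p) ℝ)
    (hXstar : Xstar = (C₁ + C₂ + C₃ * Pmatᵀ - (κ / ρ) • Gᵀ)
      * ((2 : ℝ) • (1 : Matrix (Fin p) (Fin p) ℝ) + Pmat * Pmatᵀ)⁻¹) :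
    ((2 : ℝ) • (1 : Matrix (Fin p) (Fin p) ℝ) + Pmat * Pmatᵀ).PosDef ∧
    ∀ X : Matrix (Fin p) (Fin p) ℝ, X ≠ Xstar → f Xstar < f X :=
  stmt_16_general Pmat C₁ C₂ G C₃ ρ κ hρ f hf Xstar hXstar
end
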